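/- arXiv:2401.05025 — 4 statements merged into one kernel-verified Lean document; each statement's English description precedes it below -/
import Mathlib

section
/- Under the hypotheses of the previous lemma, the family {∏_{i∈I} R_i : I ⊆ {1,…,m}} of all 2^m products of the R_i forms a basis of L = K[R₁,…,R_m] viewed as a K-vector space. -/
set_option linter.unusedSectionVars false

private lemma castLE_eq_castSucc {n : ℕ} (h : n ≤ n + 1) (x : Fin n) :
    Fin.castLE h x = x.castSucc := rfl

private noncomputable def finsetSuccEquiv (n : ℕ) :
    Finset (Fin n) × Bool ≃ Finset (Fin (n + 1)) where
  toFun p := (if p.2 then {Fin.last n} else ∅) ∪ p.1.map Fin.castSuccEmb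
  invFun I := (I.preimage Fin.castSucc (Fin.castSucc_injective n).injOn, Fin.last n ∈ I)
  left_inv := by
    rintro ⟨J, b⟩
    have hne : ∀ j : Fin n, j.castSucc ≠ Fin.last n := fun j => (Fin.castSucc_lt_last j).ne
    refine Prod.ext ?_ ?_
    · ext j
      simp only [Finset.mem_preimage, Finset.mem_union, Finset.mem_map,
        Fin.castSuccEmb_apply, castLE_eq_castSucc]
      constructor
      · rintro (h | ⟨k, hk, hkj⟩)
        · exact absurd (by simpa using h) (by cases b <;> simp [hne j])
        · rwa [← Fin.castSucc_injective n hkj]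
      · intro hj
        exact Or.inr ⟨j, hj, rfl⟩
    · cases b <;> simp [hne, castLE_eq_castSucc]
  right_inv := by
    intro I
    ext i
    induction i using Fin.lastCases with
    | last =>
      have hne : ∀ j : Fin n, j.castSucc ≠ Fin.last n := fun j => (Fin.castSucc_lt_last j).ne
      by_cases h : Fin.last n ∈ I <;> simp [h, hne, castLE_eq_castSucc]
    | cast j =>
      have hne : j.castSucc ≠ Fin.last n := (Fin.castSucc_lt_last j).ne
      by_cases h : Fin.last n ∈ I <;>
        simp [h, hne, Finset.mem_preimage, castLE_eq_castSucc,
          (Fin.castSucc_injective n).eq_iff]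

private lemma prod_finsetSuccEquiv {L : Type*} [CommRing L] {n : ℕ} (R : Fin (n + 1) → L)
    (J : Finset (Fin n)) (b : Bool) :
    (∏ i ∈ finsetSuccEquiv n (J, b), R i) =
      (if b then R (Fin.last n) else 1) * ∏ j ∈ J, R j.castSucc := by
  classical
  have hlast : Fin.last n ∉ J.map Fin.castSuccEmb := by
    simp only [Finset.mem_map, Fin.castSuccEmb_apply, castLE_eq_castSucc]
    rintro ⟨j, _, hj⟩
    exact (Fin.castSucc_lt_last j).ne hj
  cases b with
  | false => simp [finsetSuccEquiv, Finset.prod_map, castLE_eq_castSucc]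
  | true =>
    show (∏ i ∈ {Fin.last n} ∪ J.map Fin.castSuccEmb, R i) = _
    rw [← Finset.insert_eq, Finset.prod_insert hlast, Finset.prod_map]
    simp [castLE_eq_castSucc]
set_option linter.unusedSectionVars false
set_option linter.unnecessarySimpa false
open scoped symmDiff

open Finset in
private lemma prod_mul_prod_eq {L : Type*} [CommRing L] {n : ℕ} (R : Fin n → L)
    (I J : Finset (Fin n)) :
    (∏ i ∈ I, R i) * ∏ i ∈ J, R i =
      (∏ i ∈ I ∩ J, (R i) ^ 2) * ∏ i ∈ I ∆ J, R i := by
  classical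
  have hd : Disjoint (I ∆ J) (I ∩ J) := disjoint_symmDiff_inf I J
  have h1 : I ∪ J = I ∆ J ∪ I ∩ J := (symmDiff_sup_inf I J).symm
  rw [← Finset.prod_union_inter, h1, Finset.prod_union hd, mul_assoc,
    ← Finset.prod_mul_distrib]
  rw [mul_comm]
  congr 1
  exact Finset.prod_congr rfl fun i _ => (sq (R i)).symm

private def pSpan (K : Type*) {L : Type*} [CommSemiring K] [CommRing L] [Algebra K L]
    {n : ℕ} (R : Fin n → L) : Submodule K L :=
  Submodule.span K (Set.range fun I : Finset (Fin n) => ∏ i ∈ I, R i)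

section

variable {K L : Type*} [Field K] [CommRing L] [IsDomain L] [Algebra K L]
  {n : ℕ} {R : Fin n → L}

private lemma prod_mem_pSpan (I : Finset (Fin n)) : (∏ i ∈ I, R i) ∈ pSpan K R :=
  Submodule.subset_span ⟨I, rfl⟩

private lemma one_mem_pSpan : (1 : L) ∈ pSpan K R := by
  simpa using prod_mem_pSpan (K := K) (R := R) ∅

private lemma algebraMap_mem_pSpan (c : K) : algebraMap K L c ∈ pSpan K R := by
  rw [Algebra.algebraMap_eq_smul_one]
  exact Submodule.smul_mem _ _ one_mem_pSpan

private lemma mul_mem_pSpan (h2 : ∀ i, (R i) ^ 2 ∈ (algebraMap K L).range)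
    {x y : L} (hx : x ∈ pSpan K R) (hy : y ∈ pSpan K R) : x * y ∈ pSpan K R := by
  classical
  induction hx, hy using Submodule.span_induction₂ with
  | mem_mem x y hx hy =>
    obtain ⟨I, rfl⟩ := hx
    obtain ⟨J, rfl⟩ := hy
    simp only []
    have hc : (∏ i ∈ I ∩ J, (R i) ^ 2) ∈ (algebraMap K L).range := by
      exact Subring.prod_mem _ fun i _ => h2 i
    obtain ⟨c, hc⟩ := hc
    rw [prod_mul_prod_eq, ← hc, ← Algebra.smul_def]
    exact Submodule.smul_mem _ _ (prod_mem_pSpan _)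
  | zero_left y hy => simpa using Submodule.zero_mem _
  | zero_right x hx => simpa using Submodule.zero_mem _
  | add_left x y z _ _ _ h1 h2 => simpa [add_mul] using Submodule.add_mem _ h1 h2
  | add_right x y z _ _ _ h1 h2 => simpa [mul_add] using Submodule.add_mem _ h1 h2
  | smul_left c x y _ _ h => simpa [smul_mul_assoc] using Submodule.smul_mem _ c h
  | smul_right c x y _ _ h => simpa [mul_smul_comm] using Submodule.smul_mem _ c h

private lemma pSpan_div (h2 : ∀ i, (R i) ^ 2 ∈ (algebraMap K L).range)
    {z t : L} (hz : z ∈ pSpan K R) (hz0 : z ≠ 0) (hzt : z * t ∈ pSpan K R) :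
    t ∈ pSpan K R := by
  haveI : FiniteDimensional K (pSpan K R) :=
    FiniteDimensional.span_of_finite K (Set.finite_range _)
  let f : pSpan K R →ₗ[K] pSpan K R :=
    { toFun := fun w => ⟨z * w.1, mul_mem_pSpan h2 hz w.2⟩
      map_add' := by intro u v; ext; simp [mul_add]
      map_smul' := by intro c u; ext; simp [Algebra.mul_smul_comm] }
  have hinj : Function.Injective f := by
    intro u v huv
    have : z * u.1 = z * v.1 := congrArg Subtype.val huv
    exact Subtype.ext (mul_left_cancel₀ hz0 this)
  obtain ⟨w, hw⟩ := LinearMap.surjective_of_injective hinj ⟨1, one_mem_pSpan⟩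
  have hzw : z * w.1 = 1 := congrArg Subtype.val hw
  have : t = w.1 * (z * t) := by
    rw [← mul_assoc, mul_comm w.1 z, hzw, one_mul]
  rw [this]
  exact mul_mem_pSpan h2 w.2 hzt


private lemma pSpan_decomp {R : Fin (n + 1) → L} {z : L} (hz : z ∈ pSpan K R) :
    ∃ x ∈ pSpan K (fun j : Fin n => R j.castSucc), ∃ y ∈ pSpan K (fun j : Fin n => R j.castSucc),
      z = x + R (Fin.last n) * y := by
  induction hz using Submodule.span_induction with
  | mem w hw =>
    obtain ⟨I, rfl⟩ := hw
    obtain ⟨⟨J, b⟩, rfl⟩ := (finsetSuccEquiv n).surjective I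
    cases b with
    | false =>
      refine ⟨∏ j ∈ J, R j.castSucc, prod_mem_pSpan J, 0, Submodule.zero_mem _, ?_⟩
      simp [prod_finsetSuccEquiv]
    | true =>
      refine ⟨0, Submodule.zero_mem _, ∏ j ∈ J, R j.castSucc, prod_mem_pSpan J, ?_⟩
      simp [prod_finsetSuccEquiv]
  | zero => exact ⟨0, Submodule.zero_mem _, 0, Submodule.zero_mem _, by simp⟩
  | add u v hu hv ihu ihv =>
    obtain ⟨x1, hx1, y1, hy1, rfl⟩ := ihu
    obtain ⟨x2, hx2, y2, hy2, rfl⟩ := ihv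
    exact ⟨x1 + x2, Submodule.add_mem _ hx1 hx2, y1 + y2, Submodule.add_mem _ hy1 hy2, by ring⟩
  | smul c u hu ihu =>
    obtain ⟨x1, hx1, y1, hy1, rfl⟩ := ihu
    refine ⟨c • x1, Submodule.smul_mem _ _ hx1, c • y1, Submodule.smul_mem _ _ hy1, ?_⟩
    rw [smul_add, Algebra.mul_smul_comm]


private lemma key [CharZero K] : ∀ (n : ℕ) (R : Fin n → L),
    (∀ i, (R i) ^ 2 ∈ (algebraMap K L).range) →
    (∀ I : Finset (Fin n), I.Nonempty → (∏ i ∈ I, R i) ∉ (algebraMap K L).range) →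
    ∀ s : L, s ^ 2 ∈ (algebraMap K L).range →
    (∀ I : Finset (Fin n), s * ∏ i ∈ I, R i ∉ (algebraMap K L).range) →
    s ∉ pSpan K R := by
  intro n
  induction n with
  | zero =>
    intro R _ _ s _ hsI hs
    have hrange : (Set.range fun I : Finset (Fin 0) => ∏ i ∈ I, R i) = {1} := by
      ext z
      constructor
      · rintro ⟨I, rfl⟩; simp [Finset.eq_empty_of_isEmpty I]
      · rintro rfl; exact ⟨∅, by simp⟩
    rw [pSpan, hrange, Submodule.mem_span_singleton] at hs
    obtain ⟨c, hc⟩ := hs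
    refine hsI ∅ ?_
    simp only [Finset.prod_empty, mul_one]
    exact ⟨c, by rw [Algebra.algebraMap_eq_smul_one, hc]⟩
  | succ n ih =>
    intro R h2 hp s hs2 hsI hs
    haveI : CharZero L := charZero_of_injective_algebraMap (algebraMap K L).injective
    have h2' : ∀ j : Fin n, ((fun j : Fin n => R j.castSucc) j) ^ 2 ∈ (algebraMap K L).range :=
      fun j => h2 _
    have hp' : ∀ I : Finset (Fin n), I.Nonempty →
        (∏ i ∈ I, R i.castSucc) ∉ (algebraMap K L).range := by
      intro I hI hmem
      refine hp (I.map Fin.castSuccEmb) hI.map ?_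
      rwa [Finset.prod_map]
    have hrprod : ∀ I : Finset (Fin n),
        R (Fin.last n) * ∏ i ∈ I, R i.castSucc ∉ (algebraMap K L).range := by
      intro I hmem
      refine hp (finsetSuccEquiv n (I, true)) ?_ ?_
      · refine ⟨Fin.last n, ?_⟩
        show Fin.last n ∈ (if true then {Fin.last n} else ∅) ∪ I.map Fin.castSuccEmb
        simp
      · rwa [prod_finsetSuccEquiv, if_pos rfl]
    have hrnot : R (Fin.last n) ∉ pSpan K (fun j : Fin n => R j.castSucc) :=
      ih _ h2' hp' _ (h2 (Fin.last n)) hrprod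
    have hsI' : ∀ I : Finset (Fin n), s * ∏ i ∈ I, R i.castSucc ∉ (algebraMap K L).range := by
      intro I hmem
      refine hsI (finsetSuccEquiv n (I, false)) ?_
      rwa [prod_finsetSuccEquiv, if_neg (by simp), one_mul]
    have hsnot : s ∉ pSpan K (fun j : Fin n => R j.castSucc) := ih _ h2' hp' s hs2 hsI'
    have hsrnot : s * R (Fin.last n) ∉ pSpan K (fun j : Fin n => R j.castSucc) := by
      refine ih _ h2' hp' _ ?_ ?_
      · rw [mul_pow]
        exact Subring.mul_mem _ hs2 (h2 (Fin.last n))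
      · intro I hmem
        refine hsI (finsetSuccEquiv n (I, true)) ?_
        rw [prod_finsetSuccEquiv, if_pos rfl, ← mul_assoc]
        exact hmem
    obtain ⟨x, hx, y, hy, hxy⟩ := pSpan_decomp hs
    obtain ⟨b, hb⟩ := h2 (Fin.last n)
    obtain ⟨a, ha⟩ := hs2
    have e1 : R (Fin.last n) * (2 * x * y) = s ^ 2 - x ^ 2 - R (Fin.last n) ^ 2 * y ^ 2 := by
      rw [hxy]; ring
    have hrhs : s ^ 2 - x ^ 2 - R (Fin.last n) ^ 2 * y ^ 2 ∈
        pSpan K (fun j : Fin n => R j.castSucc) := by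
      refine Submodule.sub_mem _ (Submodule.sub_mem _ ?_ ?_) ?_
      · rw [← ha]; exact algebraMap_mem_pSpan a
      · rw [sq]; exact mul_mem_pSpan h2' hx hx
      · rw [← hb, sq y, ← Algebra.smul_def]
        exact Submodule.smul_mem _ b (mul_mem_pSpan h2' hy hy)
    by_cases hy0 : y = 0
    · refine hsnot ?_
      rw [hxy, hy0, mul_zero, add_zero]
      exact hx
    by_cases hx0 : x = 0
    · refine hsrnot ?_
      have e2 : s * R (Fin.last n) = algebraMap K L b * y := by
        rw [hxy, hx0, zero_add, hb]; ring
      rw [e2, ← Algebra.smul_def]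
      exact Submodule.smul_mem _ b hy
    · have hz0 : 2 * x * y ≠ 0 := mul_ne_zero (mul_ne_zero two_ne_zero hx0) hy0
      have hzmem : 2 * x * y ∈ pSpan K (fun j : Fin n => R j.castSucc) := by
        have h2a : (2 : L) = algebraMap K L 2 := by rw [map_ofNat]
        rw [mul_assoc, h2a, ← Algebra.smul_def]
        exact Submodule.smul_mem _ _ (mul_mem_pSpan h2' hx hy)
      refine hrnot (pSpan_div h2' hzmem hz0 ?_)
      rw [mul_comm, e1]
      exact hrhs

private lemma li [CharZero K] : ∀ (n : ℕ) (R : Fin n → L),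
    (∀ i, (R i) ^ 2 ∈ (algebraMap K L).range) →
    (∀ I : Finset (Fin n), I.Nonempty → (∏ i ∈ I, R i) ∉ (algebraMap K L).range) →
    LinearIndependent K fun I : Finset (Fin n) => ∏ i ∈ I, R i := by
  intro n
  induction n with
  | zero =>
    intro R _ _
    haveI : Unique (Finset (Fin 0)) := uniqueOfSubsingleton ∅
    refine linearIndependent_unique_iff.2 ?_
    have hd : ∀ I : Finset (Fin 0), ∏ i ∈ I, R i = 1 := fun I => by
      rw [Finset.eq_empty_of_isEmpty I, Finset.prod_empty]
    rw [hd]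
    exact one_ne_zero
  | succ n ih =>
    intro R h2 hp
    have h2' : ∀ j : Fin n, ((fun j : Fin n => R j.castSucc) j) ^ 2 ∈ (algebraMap K L).range :=
      fun j => h2 _
    have hp' : ∀ I : Finset (Fin n), I.Nonempty →
        (∏ i ∈ I, R i.castSucc) ∉ (algebraMap K L).range := by
      intro I hI hmem
      refine hp (I.map Fin.castSuccEmb) hI.map ?_
      rwa [Finset.prod_map]
    have hrprod : ∀ I : Finset (Fin n),
        R (Fin.last n) * ∏ i ∈ I, R i.castSucc ∉ (algebraMap K L).range := by
      intro I hmem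
      refine hp (finsetSuccEquiv n (I, true)) ?_ ?_
      · refine ⟨Fin.last n, ?_⟩
        show Fin.last n ∈ (if true then {Fin.last n} else ∅) ∪ I.map Fin.castSuccEmb
        simp
      · rwa [prod_finsetSuccEquiv, if_pos rfl]
    have hrnot : R (Fin.last n) ∉ pSpan K (fun j : Fin n => R j.castSucc) :=
      key n _ h2' hp' _ (h2 (Fin.last n)) hrprod
    have hli' := ih _ h2' hp'
    rw [← linearIndependent_equiv (finsetSuccEquiv n)]
    rw [Fintype.linearIndependent_iff]
    intro g hg
    have hsum : ∑ J : Finset (Fin n),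
        (g (J, true) • (R (Fin.last n) * ∏ j ∈ J, R j.castSucc)
          + g (J, false) • ∏ j ∈ J, R j.castSucc) = 0 := by
      rw [← hg]
      rw [Fintype.sum_prod_type]
      refine Finset.sum_congr rfl fun J _ => ?_
      rw [Fintype.sum_bool]
      simp [prod_finsetSuccEquiv]
    rw [Finset.sum_add_distrib] at hsum
    have hB : ∑ J : Finset (Fin n), g (J, true) • (R (Fin.last n) * ∏ j ∈ J, R j.castSucc)
        = R (Fin.last n) * ∑ J : Finset (Fin n), g (J, true) • ∏ j ∈ J, R j.castSucc := by
      rw [Finset.mul_sum]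
      exact Finset.sum_congr rfl fun J _ => (mul_smul_comm _ _ _).symm
    rw [hB] at hsum
    set A : L := ∑ J : Finset (Fin n), g (J, false) • ∏ j ∈ J, R j.castSucc with hA
    set B : L := ∑ J : Finset (Fin n), g (J, true) • ∏ j ∈ J, R j.castSucc with hBdef
    have hAmem : A ∈ pSpan K (fun j : Fin n => R j.castSucc) :=
      Submodule.sum_mem _ fun J _ => Submodule.smul_mem _ _ (prod_mem_pSpan J)
    have hBmem : B ∈ pSpan K (fun j : Fin n => R j.castSucc) :=
      Submodule.sum_mem _ fun J _ => Submodule.smul_mem _ _ (prod_mem_pSpan J)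
    have hB0 : B = 0 := by
      by_contra hB0
      refine hrnot (pSpan_div h2' hBmem hB0 ?_)
      have : B * R (Fin.last n) = -A := by
        rw [mul_comm]
        exact eq_neg_of_add_eq_zero_left hsum
      rw [this]
      exact Submodule.neg_mem _ hAmem
    have hA0 : A = 0 := by
      rw [hB0, mul_zero, zero_add] at hsum
      exact hsum
    have htrue := Fintype.linearIndependent_iff.1 hli' (fun J => g (J, true))
      (by rw [← hBdef] at *; exact hB0)
    have hfalse := Fintype.linearIndependent_iff.1 hli' (fun J => g (J, false))
      (by rw [← hA] at *; exact hA0)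
    rintro ⟨J, b⟩
    cases b
    · exact hfalse J
    · exact htrue J

private lemma pSpan_eq_adjoin (h2 : ∀ i, (R i) ^ 2 ∈ (algebraMap K L).range) :
    Subalgebra.toSubmodule (Algebra.adjoin K (Set.range R)) = pSpan K R := by
  refine le_antisymm ?_ ?_
  · let S : Subalgebra K L :=
      { carrier := pSpan K R
        mul_mem' := fun hx hy => mul_mem_pSpan h2 hx hy
        one_mem' := one_mem_pSpan
        add_mem' := fun hx hy => Submodule.add_mem _ hx hy
        zero_mem' := Submodule.zero_mem _
        algebraMap_mem' := fun c => algebraMap_mem_pSpan c }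
    have hle : Algebra.adjoin K (Set.range R) ≤ S := by
      refine Algebra.adjoin_le ?_
      rintro z ⟨i, rfl⟩
      have : R i = ∏ j ∈ ({i} : Finset (Fin n)), R j := by rw [Finset.prod_singleton]
      rw [this]
      exact prod_mem_pSpan {i}
    exact fun z hz => hle hz
  · rw [pSpan]
    rw [Submodule.span_le]
    rintro z ⟨I, rfl⟩
    exact (Subalgebra.mem_toSubmodule _).2 (prod_mem fun i _ => Algebra.subset_adjoin ⟨i, rfl⟩)

end

/-- Under the hypotheses of Lemma 5, the family
`{∏_{i∈I} Rᵢ : I ⊆ {1,…,m}}` of all `2^m` products of the `Rᵢ` forms a basis of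
`L = K[R₁,…,R_m]` viewed as a `K`-vector space (the empty product being `1`). -/
theorem adjoin_sqrts_natural_basis
    {K L : Type*} [Field K] [CharZero K] [CommRing L] [IsDomain L] [Algebra K L]
    (m : ℕ) (R : Fin m → L)
    (hmem : ∀ i, (R i) ^ 2 ∈ (algebraMap K L).range)
    (hnotsq : ∀ i, ¬ ∃ a : K, algebraMap K L (a ^ 2) = (R i) ^ 2)
    (hprod : ∀ I : Finset (Fin m), I.Nonempty → (∏ i ∈ I, R i) ∉ (algebraMap K L).range) :
    ∃ b : Module.Basis (Finset (Fin m)) K (Algebra.adjoin K (Set.range R)),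
      ∀ I : Finset (Fin m), (b I : L) = ∏ i ∈ I, R i := by
  classical
  set A := Algebra.adjoin K (Set.range R) with hA
  have hPmem : ∀ I : Finset (Fin m), (∏ i ∈ I, R i) ∈ A := fun I =>
    prod_mem fun i _ => Algebra.subset_adjoin ⟨i, rfl⟩
  let b' : Finset (Fin m) → A := fun I => ⟨∏ i ∈ I, R i, hPmem I⟩
  have heq : Subalgebra.toSubmodule A = pSpan K R := pSpan_eq_adjoin hmem
  have hli : LinearIndependent K b' := by
    refine LinearIndependent.of_comp (Subalgebra.val A).toLinearMap ?_
    exact li m R hmem hprod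
  have hsub : ∀ z (hz : z ∈ pSpan K R) (hzA : z ∈ A),
      (⟨z, hzA⟩ : A) ∈ Submodule.span K (Set.range b') := by
    intro z hz
    induction hz using Submodule.span_induction with
    | mem w hw =>
      intro hwA
      obtain ⟨I, rfl⟩ := hw
      exact Submodule.subset_span ⟨I, rfl⟩
    | zero =>
      intro h
      have : (⟨0, h⟩ : A) = 0 := rfl
      rw [this]
      exact Submodule.zero_mem _
    | add x y hx hy ihx ihy =>
      intro h
      have hxA : x ∈ A := by
        rw [← Subalgebra.mem_toSubmodule, heq]; exact hx
      have hyA : y ∈ A := by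
        rw [← Subalgebra.mem_toSubmodule, heq]; exact hy
      have : (⟨x + y, h⟩ : A) = ⟨x, hxA⟩ + ⟨y, hyA⟩ := rfl
      rw [this]
      exact Submodule.add_mem _ (ihx hxA) (ihy hyA)
    | smul c x hx ihx =>
      intro h
      have hxA : x ∈ A := by
        rw [← Subalgebra.mem_toSubmodule, heq]; exact hx
      have : (⟨c • x, h⟩ : A) = c • (⟨x, hxA⟩ : A) := rfl
      rw [this]
      exact Submodule.smul_mem _ _ (ihx hxA)
  have hspan : ⊤ ≤ Submodule.span K (Set.range b') := by
    intro a _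
    have haP : (a : L) ∈ pSpan K R := by
      rw [← heq]; exact (Subalgebra.mem_toSubmodule _).2 a.2
    have := hsub (a : L) haP a.2
    simpa using this
  refine ⟨Module.Basis.mk hli hspan, fun I => ?_⟩
  rw [Module.Basis.mk_apply]
end

section
/- Let f : ℝ^{nd} → ℝ be a finite sum f = Σ_{F ∈ P(E)} P_F · ∏_{uv ∈ F} D_{u,v}, where E is a set of unordered pairs of distinct vertices, each P_F is a rational function with integer coefficients, and D_{u,v}(x) = ‖x_u − x_v‖. If f vanishes at some generic point x ∈ ℝ^{nd} (with d ≥ 2), then all coefficient functions P_F are zero, i.e., f is identically zero on its domain. -/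
/-!
Let `K` be the fraction field of `ℤ[x]`, embedded in `ℝ` by evaluation at the generic point, and
let `a_e = D_e(x)`, so that `a_e ^ 2 = q_e(x)` for the squared-distance polynomial `q_e`. The
`q_e` are pairwise non-associated primes: for `d ≥ 2`, `q_e` is a monic quadratic
`(x_{u,0} - x_{v,0}) ^ 2 + c` in one coordinate, where `c` is a sum of squares that is positive at
some point, so `-c` is not a square. Hence no nonempty product `∏_{e ∈ T} q_e` is a square in
`ℤ[x]`, nor in `K` because `ℤ[x]` is integrally closed, and so no nonempty product of the `a_e`
lies in `K`. This makes the products `∏_{e ∈ F} a_e` linearly independent over `K`: inductively,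
if `b = α + β a_j` with `α, β ∈ K(a_i : i ≠ j)` and `b ^ 2 ∈ K`, the cross term `2 α β a_j` of
`b ^ 2` forces `α = 0` or `β = 0`.
-/

open Finset

theorem IntermediateField.notMem_bot_of_sq_eq {K L : Type*} [Field K] [Field L] [Algebra K L]
    {b : L} {k : K} (hb : b ^ 2 = algebraMap K L k) (hk : ¬ IsSquare k) :
    b ∉ (⊥ : IntermediateField K L) := by
  rw [IntermediateField.mem_bot]
  rintro ⟨w, rfl⟩
  exact hk ⟨w, (algebraMap K L).injective (by rw [← hb, map_mul, sq])⟩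

theorem IsIntegrallyClosed.isSquare_algebraMap_iff {R K : Type*} [CommRing R] [CommRing K]
    [Algebra R K] [IsFractionRing R K] [IsIntegrallyClosed R] {r : R} :
    IsSquare (algebraMap _ K r) ↔ IsSquare r := by
  refine ⟨fun ⟨w, hw⟩ => ?_, fun h => h.map _⟩
  obtain ⟨y, rfl⟩ := exists_algebraMap_eq_of_isIntegral_pow (R := R) (K := K) two_pos
    (by rw [sq, ← hw]; exact isIntegral_algebraMap)
  exact ⟨y, IsFractionRing.injective R K (by rw [hw, map_mul])⟩

theorem not_isSquare_mul_of_prime {M : Type*} [CommMonoidWithZero M] [IsCancelMulZero M] {p c : M}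
    (hp : Prime p) (hc : ¬ p ∣ c) : ¬ IsSquare (p * c) := by
  rintro ⟨r, hr⟩
  obtain ⟨t, rfl⟩ : p ∣ r := hp.dvd_of_dvd_pow (n := 2) ⟨c, by rw [sq, ← hr]⟩
  exact hc ⟨t * t, mul_left_cancel₀ hp.ne_zero (by rw [hr]; ac_rfl)⟩

namespace Polynomial

theorem irreducible_X_sub_C_sq_add_C {R : Type*} [CommRing R] [IsDomain R] {b c : R}
    (h : ∀ r, (r - b) ^ 2 + c ≠ 0) :
    Irreducible ((X - C b) ^ 2 + C c) := by
  have hdeg : ((X - C b) ^ 2 + C c).natDegree = 2 := by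
    rw [natDegree_add_C, natDegree_pow, natDegree_X_sub_C]
  have hmonic : ((X - C b) ^ 2 + C c).Monic :=
    ((monic_X_sub_C b).pow 2).add_of_left (by
      rw [degree_pow, degree_X_sub_C]
      exact degree_C_le.trans_lt (by norm_num))
  rw [hmonic.irreducible_iff_roots_eq_zero_of_degree_le_three hdeg.ge (hdeg.le.trans (by norm_num)),
    Multiset.eq_zero_iff_forall_notMem]
  intro r hr
  apply h r
  simpa using (mem_roots hmonic.ne_zero).1 hr

end Polynomial

theorem Sym2.injOn_mk_setOf_fst_lt {V : Type*} [LinearOrder V] :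
    Set.InjOn (fun e : V × V => s(e.1, e.2)) {e | e.1 < e.2} := by
  rintro ⟨u, v⟩ (huv : u < v) ⟨u', v'⟩ (huv' : u' < v') h
  obtain ⟨rfl, rfl⟩ | ⟨rfl, rfl⟩ := Sym2.eq_iff.1 h
  · rfl
  · exact (lt_asymm huv huv').elim

section Multiquadratic

open Polynomial IntermediateField

variable {K L : Type*} [Field K] [Field L] [Algebra K L]

theorem exists_eq_add_mul_of_mem_adjoin_simple {a x : L} {c : K} (ha : a ^ 2 = algebraMap K L c)
    (hx : x ∈ K⟮a⟯) : ∃ α β : K, x = algebraMap K L α + algebraMap K L β * a := by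
  have hq : (X ^ 2 - C c : K[X]).Monic := monic_X_pow_sub_C c two_ne_zero
  have hqa : aeval a (X ^ 2 - C c) = 0 := by simp [ha]
  rw [← mem_toSubalgebra, adjoin_simple_toSubalgebra_of_isAlgebraic ⟨_, hq.ne_zero, hqa⟩,
    Algebra.adjoin_singleton_eq_range_aeval] at hx
  obtain ⟨p, rfl⟩ := hx
  have hdeg : (p %ₘ (X ^ 2 - C c)).degree ≤ 1 := by
    have := degree_modByMonic_lt p hq
    rw [degree_X_pow_sub_C two_pos] at this
    exact Order.le_of_lt_succ this
  obtain ⟨α, β, hr⟩ : ∃ α β : K, p %ₘ (X ^ 2 - C c) = C β * X + C α :=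
    ⟨_, _, eq_X_add_C_of_degree_le_one hdeg⟩
  refine ⟨α, β, ?_⟩
  rw [AlgHom.toRingHom_eq_coe, RingHom.coe_coe, ← aeval_modByMonic_eq_self_of_root hqa, hr]
  simp only [map_add, map_mul, aeval_C, aeval_X]
  ring

variable {ι : Type*} [DecidableEq ι] {a : ι → L} [NeZero (2 : L)]

theorem notMem_adjoin_of_sq_mem {s : Finset ι}
    (hsq : ∀ i ∈ s, a i ^ 2 ∈ (⊥ : IntermediateField K L))
    (hprod : ∀ T ⊆ s, T.Nonempty → ∏ i ∈ T, a i ∉ (⊥ : IntermediateField K L))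
    {b : L} (hb : b ^ 2 ∈ (⊥ : IntermediateField K L))
    (hbprod : ∀ T ⊆ s, b * ∏ i ∈ T, a i ∉ (⊥ : IntermediateField K L)) :
    b ∉ adjoin K (a '' s) := by
  induction s using Finset.induction_on generalizing b with
  | empty => simpa using hbprod ∅ (empty_subset _)
  | insert j s hj ih =>
    set M := adjoin K (a '' s)
    have hM : (⊥ : IntermediateField K L) ≤ M := bot_le
    have ih' : ∀ b : L, b ^ 2 ∈ (⊥ : IntermediateField K L) →
        (∀ T ⊆ s, b * ∏ i ∈ T, a i ∉ (⊥ : IntermediateField K L)) → b ∉ M :=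
      fun b => ih (fun i hi => hsq i (mem_insert_of_mem hi))
        (fun T hT => hprod T (hT.trans (subset_insert j s)))
    have hprod_insert : ∀ T ⊆ s, ∏ i ∈ insert j T, a i = a j * ∏ i ∈ T, a i :=
      fun T hT => prod_insert fun h => hj (hT h)
    have hj_sq : a j ^ 2 ∈ (⊥ : IntermediateField K L) := hsq j (mem_insert_self j s)
    have hj_notMem : a j ∉ M := ih' _ hj_sq fun T hT => by
      rw [← hprod_insert T hT]
      exact hprod _ (insert_subset_insert j hT) (insert_nonempty j T)
    intro hbM
    rw [coe_insert, Set.image_insert_eq, ← Set.union_singleton, ← adjoin_adjoin_left,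
      mem_restrictScalars] at hbM
    obtain ⟨α, β, rfl⟩ := exists_eq_add_mul_of_mem_adjoin_simple
      (c := ⟨_, hM hj_sq⟩) rfl hbM
    simp only [IntermediateField.algebraMap_apply] at hb hbprod ⊢
    have hbprod' : ∀ T ⊆ s, (↑α + ↑β * a j) * ∏ i ∈ T, a i ∉ (⊥ : IntermediateField K L) :=
      fun T hT => hbprod T (hT.trans (subset_insert j s))
    rcases eq_or_ne (α : L) 0 with hα | hα
    · rw [hα, zero_add] at hb hbprod
      refine ih' (β * a j ^ 2) ?_ (fun T hT => ?_) (M.mul_mem β.2 (hM hj_sq))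
      · rw [show (β * a j ^ 2 : L) ^ 2 = (β * a j) ^ 2 * a j ^ 2 by ring]
        exact mul_mem hb hj_sq
      · rw [pow_two, ← mul_assoc, mul_assoc _ (a j), ← hprod_insert T hT]
        exact hbprod _ (insert_subset_insert j hT)
    rcases eq_or_ne (β : L) 0 with hβ | hβ
    · rw [hβ, zero_mul, add_zero] at hb hbprod'
      exact ih' α hb hbprod' α.2
    -- the cross term `2 α β a j` of `(α + β a j) ^ 2` exhibits `a j` as an element of `M`
    set m : M := (2 * α * β)⁻¹ * (⟨_, hM hb⟩ - α ^ 2 - β ^ 2 * ⟨_, hM hj_sq⟩)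
    have hm : a j = m := by
      simp only [m]
      push_cast [show ((2 : M) : L) = 2 from rfl]
      field_simp
      ring
    exact hj_notMem (hm ▸ m.2)

theorem linearIndepOn_prod_of_sq_mem {s : Finset ι}
    (hsq : ∀ i ∈ s, a i ^ 2 ∈ (⊥ : IntermediateField K L))
    (hprod : ∀ T ⊆ s, T.Nonempty → ∏ i ∈ T, a i ∉ (⊥ : IntermediateField K L)) :
    LinearIndepOn K (fun T => ∏ i ∈ T, a i) (s.powerset : Set (Finset ι)) := by
  rw [linearIndepOn_finset_iff]
  induction s using Finset.induction_on with
  | empty => simp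
  | insert j s hj ih =>
    have hsq' : ∀ i ∈ s, a i ^ 2 ∈ (⊥ : IntermediateField K L) :=
      fun i hi => hsq i (mem_insert_of_mem hi)
    have hprod' : ∀ T ⊆ s, T.Nonempty → ∏ i ∈ T, a i ∉ (⊥ : IntermediateField K L) :=
      fun T hT => hprod T (hT.trans (subset_insert j s))
    specialize ih hsq' hprod'
    intro c hc
    set A := ∑ T ∈ s.powerset, c T • ∏ i ∈ T, a i
    set B := ∑ T ∈ s.powerset, c (insert j T) • ∏ i ∈ T, a i
    have hAB : A + B * a j = 0 := by
      rw [sum_powerset_insert hj] at hc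
      rw [← hc, sum_mul]
      congr 1
      refine sum_congr rfl fun T hT => ?_
      rw [prod_insert fun h => hj (mem_powerset.1 hT h), smul_mul_assoc, mul_comm]
    have hmem : ∀ c : Finset ι → K, ∑ T ∈ s.powerset, c T • ∏ i ∈ T, a i ∈ adjoin K (a '' s) :=
      fun c => sum_mem fun T hT => smul_mem _ (prod_mem fun i hi =>
        subset_adjoin _ _ (Set.mem_image_of_mem a (mem_powerset.1 hT hi)))
    have hB : B = 0 := by
      by_contra hB
      refine notMem_adjoin_of_sq_mem hsq' hprod' (hsq j (mem_insert_self j s))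
        (fun T hT => ?_) (?_ : a j ∈ adjoin K (a '' s))
      · rw [← prod_insert fun h => hj (hT h)]
        exact hprod _ (insert_subset_insert j hT) (insert_nonempty j T)
      · rw [show a j = -A / B by field_simp; linear_combination hAB]
        exact div_mem (neg_mem (hmem c)) (hmem _)
    have hA : A = 0 := by simpa [hB] using hAB
    intro T hT
    rw [powerset_insert, mem_union, mem_image] at hT
    obtain hT | ⟨U, hU, rfl⟩ := hT
    · exact ih c hA T hT
    · exact ih (fun T => c (insert j T)) hB U hU

theorem linearIndepOn_prod_of_sq_eq_algebraMap {R : Type*} [CommRing R] [IsIntegrallyClosed R]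
    [Algebra R K] [IsFractionRing R K] {q : ι → R} {s : Finset ι}
    (ha : ∀ i ∈ s, a i ^ 2 = algebraMap K L (algebraMap R K (q i)))
    (hq : ∀ T ⊆ s, T.Nonempty → ¬ IsSquare (∏ i ∈ T, q i)) :
    LinearIndepOn K (fun T => ∏ i ∈ T, a i) (s.powerset : Set (Finset ι)) := by
  refine linearIndepOn_prod_of_sq_mem (fun i hi => ⟨_, (ha i hi).symm⟩) fun T hT hTne => ?_
  refine IntermediateField.notMem_bot_of_sq_eq (k := algebraMap R K (∏ i ∈ T, q i)) ?_
    (IsIntegrallyClosed.isSquare_algebraMap_iff.not.2 (hq T hT hTne))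
  rw [← prod_pow, map_prod, map_prod]
  exact prod_congr rfl fun i hi => ha i (hT hi)

end Multiquadratic

section SquaredDistance

open MvPolynomial

variable {V D : Type*} [Fintype D]

noncomputable def sqDist (e : V × V) : MvPolynomial (V × D) ℤ :=
  ∑ k : D, (X (e.1, k) - X (e.2, k)) ^ 2

theorem aeval_sqDist {A : Type*} [CommRing A] (t : V × D → A) (e : V × V) :
    aeval t (sqDist e) = ∑ k : D, (t (e.1, k) - t (e.2, k)) ^ 2 := by
  simp [sqDist]

theorem prime_sqDist [Nontrivial D] {e : V × V} (he : e.1 ≠ e.2) :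
    Prime (sqDist (D := D) e) := by
  classical
  obtain ⟨k₀, k₁, hk⟩ := exists_pair_ne D
  set y : V × D := (e.1, k₀)
  set ν : V × D → MvPolynomial {s // s ≠ y} ℤ := fun s => if h : s = y then 0 else X ⟨s, h⟩
  -- `sqDist e` as a polynomial in the variable `y`, over the polynomial ring in the others
  let φ : MvPolynomial (V × D) ℤ ≃ₐ[ℤ] Polynomial (MvPolynomial {s // s ≠ y} ℤ) :=
    (renameEquiv ℤ (Equiv.optionSubtypeNe y).symm).trans (optionEquivLeft ℤ _)
  have hφ_X : ∀ s ≠ y, φ (X s) = Polynomial.C (ν s) := by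
    intro s hs
    simp [φ, ν, hs, Equiv.optionSubtypeNe_symm_of_ne hs]
  have hφ_y : φ (X y) = Polynomial.X := by simp [φ]
  have hne_y : ∀ k, (e.2, k) ≠ y := fun k h => he (congrArg Prod.fst h).symm
  set c := ∑ k ∈ univ.erase k₀, (ν (e.1, k) - ν (e.2, k)) ^ 2
  have hφ : φ (sqDist e) =
      (Polynomial.X - Polynomial.C (ν (e.2, k₀))) ^ 2 + Polynomial.C c := by
    rw [sqDist, ← add_sum_erase _ _ (mem_univ k₀), map_add, map_pow, map_sub, hφ_y,
      hφ_X _ (hne_y k₀)]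
    simp only [c, map_sum, map_pow, map_sub]
    refine congrArg (_ + ·) (sum_congr rfl fun k hk => ?_)
    rw [hφ_X _ (fun h => (mem_erase.1 hk).1 (congrArg Prod.snd h)), hφ_X _ (hne_y k)]
  have hroot : ∀ r, (r - ν (e.2, k₀)) ^ 2 + c ≠ 0 := by
    intro r hr
    set z : {s // s ≠ y} → ℤ := fun s => if s.1 = (e.1, k₁) then 1 else 0
    have hν : ∀ s (hs : s ≠ y), eval z (ν s) = if s = (e.1, k₁) then 1 else 0 :=
      fun s hs => by simp [ν, z, hs]
    have hc : 1 ≤ eval z c := calc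
      (1 : ℤ) = (eval z (ν (e.1, k₁)) - eval z (ν (e.2, k₁))) ^ 2 := by
        rw [hν _ fun h => hk (congrArg Prod.snd h).symm, hν _ (hne_y k₁)]
        simp [he.symm]
      _ ≤ eval z c := by
        simp only [c, map_sum, map_pow, map_sub]
        exact single_le_sum (f := fun k => (eval z (ν (e.1, k)) - eval z (ν (e.2, k))) ^ 2)
          (fun k _ => sq_nonneg _) (mem_erase.2 ⟨hk.symm, mem_univ k₁⟩)
    have := congrArg (eval z) hr
    rw [map_add, map_pow, map_zero] at this
    nlinarith [sq_nonneg (eval z (r - ν (e.2, k₀)))]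
  rw [← UniqueFactorizationMonoid.irreducible_iff_prime, ← MulEquiv.irreducible_iff φ, hφ]
  exact Polynomial.irreducible_X_sub_C_sq_add_C hroot

theorem sqDist_not_dvd [Nonempty D] {e e' : V × V} (he' : e'.1 ≠ e'.2)
    (hee : s(e.1, e.2) ≠ s(e'.1, e'.2)) : ¬ sqDist (D := D) e ∣ sqDist e' := by
  classical
  obtain ⟨w, hw', hw⟩ : ∃ w, (w = e'.1 ∨ w = e'.2) ∧ w ∉ s(e.1, e.2) := by
    by_contra! h
    exact hee ((Sym2.mem_and_mem_iff he').1 ⟨h _ (Or.inl rfl), h _ (Or.inr rfl)⟩)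
  rw [Sym2.mem_iff, not_or] at hw
  rintro ⟨g, hg⟩
  have := congrArg (aeval fun s : V × D => if s.1 = w then (1 : ℤ) else 0) hg
  rw [map_mul, aeval_sqDist, aeval_sqDist] at this
  rcases hw' with rfl | rfl <;> simp [Ne.symm hw.1, Ne.symm hw.2, he', he'.symm] at this

theorem not_isSquare_prod_sqDist [Nontrivial D] {T : Finset (V × V)} (hT : T.Nonempty)
    (hloop : ∀ e ∈ T, e.1 ≠ e.2) (hinj : Set.InjOn (fun e : V × V => s(e.1, e.2)) T) :
    ¬ IsSquare (∏ e ∈ T, sqDist (D := D) e) := by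
  classical
  obtain ⟨e₀, he₀⟩ := hT
  rw [← mul_prod_erase T _ he₀]
  refine not_isSquare_mul_of_prime (prime_sqDist (hloop e₀ he₀)) ?_
  rw [(prime_sqDist (hloop e₀ he₀)).dvd_finsetProd_iff]
  rintro ⟨e, he, hdvd⟩
  refine sqDist_not_dvd (hloop e (mem_of_mem_erase he)) (fun h => ?_) hdvd
  exact ne_of_mem_erase he (hinj (mem_of_mem_erase he) he₀ h.symm)

end SquaredDistance

theorem generic_vanishing_implies_zero_coefficients_general
    (d n : ℕ) (hd : 2 ≤ d)
    (E : Finset (Fin n × Fin n)) (hE : ∀ e ∈ E, e.1 < e.2)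
    (num den : Finset (Fin n × Fin n) → MvPolynomial (Fin n × Fin d) ℤ)
    (hden : ∀ F ∈ E.powerset, den F ≠ 0)
    (x : Fin n → Fin d → ℝ)
    (hgen : ∀ S : MvPolynomial (Fin n × Fin d) ℤ, S ≠ 0 →
      MvPolynomial.aeval (fun p : Fin n × Fin d => x p.1 p.2) S ≠ 0)
    (hf : ∑ F ∈ E.powerset,
        (MvPolynomial.aeval (fun p : Fin n × Fin d => x p.1 p.2) (num F)
            / MvPolynomial.aeval (fun p : Fin n × Fin d => x p.1 p.2) (den F))
          * ∏ e ∈ F, Real.sqrt (∑ j : Fin d, (x e.1 j - x e.2 j) ^ 2) = 0) :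
    ∀ F ∈ E.powerset, num F = 0 := by
  have : Nontrivial (Fin d) := Fin.nontrivial_iff_two_le.2 hd
  set ev := MvPolynomial.aeval (R := ℤ) fun p : Fin n × Fin d => x p.1 p.2
  have hinj : Function.Injective ev :=
    (injective_iff_map_eq_zero ev).2 fun S hS => by_contra fun h => hgen S h hS
  let _ : Algebra (FractionRing (MvPolynomial (Fin n × Fin d) ℤ)) ℝ :=
    (IsFractionRing.lift hinj).toAlgebra
  have hmap : ∀ S, algebraMap (FractionRing (MvPolynomial (Fin n × Fin d) ℤ)) ℝ
      (algebraMap _ _ S) = ev S :=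
    IsFractionRing.lift_algebraMap hinj
  have hindep := linearIndepOn_prod_of_sq_eq_algebraMap (K := FractionRing _) (s := E)
    (a := fun e => √(∑ j : Fin d, (x e.1 j - x e.2 j) ^ 2)) (q := sqDist)
    (fun e _ => by rw [hmap, aeval_sqDist, Real.sq_sqrt (sum_nonneg fun j _ => sq_nonneg _)])
    (fun T hTE hT => not_isSquare_prod_sqDist hT (fun e he => (hE e (hTE he)).ne)
      (Sym2.injOn_mk_setOf_fst_lt.mono fun e he => hE e (hTE he)))
  intro F hF
  have hc := linearIndepOn_finset_iff.1 hindep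
    (fun F => algebraMap _ (FractionRing _) (num F) / algebraMap _ _ (den F))
    (by simpa [Algebra.smul_def, hmap] using hf) F hF
  rw [div_eq_zero_iff, IsFractionRing.to_map_eq_zero_iff, IsFractionRing.to_map_eq_zero_iff] at hc
  exact hc.resolve_right (hden F hF)

/-- (Lemma 6 of the paper.) Let
`f = Σ_{F ∈ P(E)} P_F · ∏_{uv ∈ F} D_{u,v}` on `ℝ^{nd}` (`d ≥ 2`), where `E` is a set of
unordered pairs of distinct vertices, each `P_F` is a rational function with integer
coefficients, and `D_{u,v}(x) = ‖x_u − x_v‖`. If `f` vanishes at some generic point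
`x ∈ ℝ^{nd}` then all the coefficient functions `P_F` are zero, i.e. `f` is identically
zero on its domain. -/
theorem generic_vanishing_implies_zero_coefficients
    (d n : ℕ) (hd : 2 ≤ d) (hn : 2 ≤ n)
    (E : Finset (Fin n × Fin n)) (hE : ∀ e ∈ E, e.1 < e.2)
    (num den : Finset (Fin n × Fin n) → MvPolynomial (Fin n × Fin d) ℤ)
    (hden : ∀ F ∈ E.powerset, den F ≠ 0)
    (x : Fin n → Fin d → ℝ)
    (hgen : ∀ S : MvPolynomial (Fin n × Fin d) ℤ, S ≠ 0 →
      MvPolynomial.aeval (fun p : Fin n × Fin d => x p.1 p.2) S ≠ 0)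
    (hf : ∑ F ∈ E.powerset,
        (MvPolynomial.aeval (fun p : Fin n × Fin d => x p.1 p.2) (num F)
            / MvPolynomial.aeval (fun p : Fin n × Fin d => x p.1 p.2) (den F))
          * ∏ e ∈ F, Real.sqrt (∑ j : Fin d, (x e.1 j - x e.2 j) ^ 2) = 0) :
    ∀ F ∈ E.powerset, num F = 0 :=
  generic_vanishing_implies_zero_coefficients_general d n hd E hE num den hden x hgen hf
end

section
/- Let F be a set of r arcs of a directed graph and U a set of r vertices, and let N_S be the square submatrix of the weighted incidence transpose D·Bᵀ (rows indexed by F, columns by U, weights D(u,v) > 0); if F is a forest each of whose components contains exactly one vertex outside U, then det N_S = ± ∏_{uv ∈ F} D(u,v). -/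
open SimpleGraph

namespace DetForestAux

variable {n : ℕ}

lemma max_endpoint {G : SimpleGraph (Fin n)} (hforest : G.IsAcyclic)
    {a b : Fin n} (p : G.Walk a b) (hp : p.IsPath) (hab : a ≠ b)
    (hmax : ∀ (c d : Fin n) (q : G.Walk c d), q.IsPath → q.length ≤ p.length) :
    ∃ d : Fin n, G.Adj a d ∧ ∀ c, G.Adj a c → c = d := by
  obtain ⟨d, hd, q, rfl⟩ := Walk.exists_eq_cons_of_ne hab p
  rw [Walk.cons_isPath_iff] at hp
  obtain ⟨hq, haq⟩ := hp
  refine ⟨d, hd, fun c hac => ?_⟩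
  by_contra hcd
  by_cases hmem : c ∈ q.support
  · set t := q.takeUntil c hmem with ht_def
    have ht : t.IsPath := hq.takeUntil hmem
    have hat : a ∉ t.support := fun h => haq (q.support_takeUntil_subset hmem h)
    have hpath : (Walk.cons hd t).IsPath := (Walk.cons_isPath_iff hd t).mpr ⟨ht, hat⟩
    have hedge : s(c, a) ∉ (Walk.cons hd t).edges := by
      simp only [Walk.edges_cons, List.mem_cons]
      rintro (h | h)
      · rw [Sym2.eq_iff] at h
        rcases h with ⟨h1, h2⟩ | ⟨h1, h2⟩
        · exact hac.ne' h1
        · exact hcd h1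
      · exact hat (t.snd_mem_support_of_mem_edges h)
    exact hforest _ (SimpleGraph.Path.cons_isCycle ⟨Walk.cons hd t, hpath⟩ hac.symm hedge)
  · have hpath : (Walk.cons hac.symm (Walk.cons hd q)).IsPath := by
      rw [Walk.cons_isPath_iff]
      refine ⟨(Walk.cons_isPath_iff hd q).mpr ⟨hq, haq⟩, ?_⟩
      simp only [Walk.support_cons, List.mem_cons]
      rintro (h | h)
      · exact hac.ne' h
      · exact hmem h
    have := hmax _ _ _ hpath
    simp only [Walk.length_cons] at this
    omega

lemma adj_arc {r : ℕ} (F : Fin r → Fin n × Fin n) (hloop : ∀ i, (F i).1 ≠ (F i).2)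
    (k : Fin r) : (fromRel fun a b => ∃ i, F i = (a, b)).Adj (F k).1 (F k).2 := by
  rw [fromRel_adj]
  exact ⟨hloop k, Or.inl ⟨k, Prod.mk.eta.symm⟩⟩

lemma arc_adj {r : ℕ} (F : Fin r → Fin n × Fin n) {x y : Fin n}
    (h : (fromRel fun a b => ∃ i, F i = (a, b)).Adj x y) :
    ∃ k, F k = (x, y) ∨ F k = (y, x) := by
  rw [fromRel_adj] at h
  rcases h.2 with ⟨k, hk⟩ | ⟨k, hk⟩
  exacts [⟨k, Or.inl hk⟩, ⟨k, Or.inr hk⟩]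

lemma exists_leaf {r : ℕ} (F : Fin (r + 1) → Fin n × Fin n)
    (hloop : ∀ i, (F i).1 ≠ (F i).2)
    (hpar : ∀ i j, i ≠ j → F i ≠ F j ∧ F i ≠ ((F j).2, (F j).1))
    (U : Fin (r + 1) → Fin n)
    (hforest : (fromRel fun a b => ∃ i, F i = (a, b)).IsAcyclic)
    (hcomp : ∀ v : Fin n, (∃ i, (F i).1 = v ∨ (F i).2 = v) →
      ∃! w : Fin n, (fromRel fun a b => ∃ i, F i = (a, b)).Reachable v w ∧ w ∉ Set.range U) :
    ∃ (j i : Fin (r + 1)), ((F i).1 = U j ∨ (F i).2 = U j) ∧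
      ∀ k, ((F k).1 = U j ∨ (F k).2 = U j) → k = i := by
  set G := fromRel fun a b => ∃ i, F i = (a, b) with hG
  set S : Set ℕ := {L | ∃ (a b : Fin n) (p : G.Walk a b), p.IsPath ∧ p.length = L} with hS
  have hS1 : 1 ∈ S := by
    refine ⟨(F 0).1, (F 0).2, (adj_arc F hloop 0).toWalk, ?_, rfl⟩
    simp [Walk.isPath_def, hloop 0]
  have hSbdd : BddAbove S := by
    refine ⟨n, fun L hL => ?_⟩
    obtain ⟨a, b, p, hp, rfl⟩ := hL
    have hnodup : p.support.Nodup := (Walk.isPath_def p).mp hp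
    have h2 := hnodup.length_le_card
    rw [Walk.length_support, Fintype.card_fin] at h2
    omega
  obtain ⟨a, b, p, hp, hlen⟩ := Nat.sSup_mem ⟨1, hS1⟩ hSbdd
  have hL1 : 1 ≤ sSup S := le_csSup hSbdd hS1
  have hmax : ∀ (c d : Fin n) (q : G.Walk c d), q.IsPath → q.length ≤ p.length := by
    intro c d q hq
    rw [hlen]
    exact le_csSup hSbdd ⟨c, d, q, hq, rfl⟩
  have hab : a ≠ b := by
    rintro rfl
    have hnil : p = Walk.nil := congrArg Subtype.val (SimpleGraph.Path.loop_eq ⟨p, hp⟩)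
    rw [hnil] at hlen
    simp only [Walk.length_nil] at hlen
    omega
  have endpoint : ∀ (x y : Fin n) (q : G.Walk x y), q.IsPath → x ≠ y →
      (∀ (c d : Fin n) (w : G.Walk c d), w.IsPath → w.length ≤ q.length) →
      (∃ k, (F k).1 = x ∨ (F k).2 = x) ∧
      ∀ k1 k2, ((F k1).1 = x ∨ (F k1).2 = x) → ((F k2).1 = x ∨ (F k2).2 = x) → k1 = k2 := by
    intro x y q hq hxy hqmax
    obtain ⟨d, hdadj, hduniq⟩ := max_endpoint hforest q hq hxy hqmax
    have hinc : ∀ k, ((F k).1 = x ∨ (F k).2 = x) → F k = (x, d) ∨ F k = (d, x) := by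
      intro k hk
      rcases hk with hk | hk
      · have h1 : G.Adj x (F k).2 := by rw [← hk]; exact adj_arc F hloop k
        have h2 := hduniq _ h1
        left; rw [← hk, ← h2]
      · have h1 : G.Adj x (F k).1 := by rw [← hk]; exact (adj_arc F hloop k).symm
        have h2 := hduniq _ h1
        right; rw [← hk, ← h2]
    constructor
    · obtain ⟨k, hk | hk⟩ := arc_adj F hdadj
      · exact ⟨k, Or.inl (by rw [hk])⟩
      · exact ⟨k, Or.inr (by rw [hk])⟩
    · intro k1 k2 h1 h2
      by_contra hne
      obtain ⟨hne1, hne2⟩ := hpar k1 k2 hne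
      rcases hinc k1 h1 with e1 | e1 <;> rcases hinc k2 h2 with e2 | e2
      · exact hne1 (e1.trans e2.symm)
      · apply hne2; rw [e1, e2]
      · apply hne2; rw [e1, e2]
      · exact hne1 (e1.trans e2.symm)
  have hcase : a ∈ Set.range U ∨ b ∈ Set.range U := by
    by_contra h
    push_neg at h
    obtain ⟨ha, hb⟩ := h
    obtain ⟨⟨k, hk⟩, -⟩ := endpoint a b p hp hab hmax
    obtain ⟨w, -, hwuniq⟩ := hcomp a ⟨k, hk⟩
    have h1 := hwuniq a ⟨Reachable.refl a, ha⟩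
    have h2 := hwuniq b ⟨⟨p⟩, hb⟩
    exact hab (h1.trans h2.symm)
  rcases hcase with ⟨j, hj⟩ | ⟨j, hj⟩
  · subst hj
    obtain ⟨⟨k, hk⟩, huniq⟩ := endpoint (U j) b p hp hab hmax
    exact ⟨j, k, hk, fun k' h' => huniq k' k h' hk⟩
  · subst hj
    have hmax' : ∀ (c d : Fin n) (w : G.Walk c d), w.IsPath → w.length ≤ p.reverse.length := by
      intro c d w hw
      rw [Walk.length_reverse]
      exact hmax c d w hw
    obtain ⟨⟨k, hk⟩, huniq⟩ := endpoint (U j) a p.reverse hp.reverse hab.symm hmax'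
    exact ⟨j, k, hk, fun k' h' => huniq k' k h' hk⟩

lemma det_pm_one : ∀ (r : ℕ) (F : Fin r → Fin n × Fin n),
    (∀ i, (F i).1 ≠ (F i).2) →
    (∀ i j, i ≠ j → F i ≠ F j ∧ F i ≠ ((F j).2, (F j).1)) →
    ∀ (U : Fin r → Fin n), Function.Injective U →
    (fromRel fun a b => ∃ i, F i = (a, b)).IsAcyclic →
    (∀ v : Fin n, (∃ i, (F i).1 = v ∨ (F i).2 = v) →
      ∃! w : Fin n, (fromRel fun a b => ∃ i, F i = (a, b)).Reachable v w ∧ w ∉ Set.range U) →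
    ((Matrix.of fun i j : Fin r =>
        (if (F i).2 = U j then (1 : ℝ) else if (F i).1 = U j then -1 else 0)).det = 1 ∨
     (Matrix.of fun i j : Fin r =>
        (if (F i).2 = U j then (1 : ℝ) else if (F i).1 = U j then -1 else 0)).det = -1) := by
  intro r
  induction r with
  | zero =>
    intro F _ _ U _ _ _
    left
    exact Matrix.det_isEmpty
  | succ m IH =>
    intro F hloop hpar U hU hforest hcomp
    set G := fromRel fun a b => ∃ i, F i = (a, b) with hG
    obtain ⟨j, i, hinc, huniq⟩ := exists_leaf F hloop hpar U hforest hcomp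
    set F' : Fin m → Fin n × Fin n := fun k => F (i.succAbove k) with hF'
    set U' : Fin m → Fin n := fun l => U (j.succAbove l) with hU'def
    set G' := fromRel fun a b => ∃ k, F' k = (a, b) with hG'
    have hle : G' ≤ G := by
      intro x y hxy
      rw [hG', fromRel_adj] at hxy
      rw [hG, fromRel_adj]
      refine ⟨hxy.1, ?_⟩
      rcases hxy.2 with ⟨k, hk⟩ | ⟨k, hk⟩
      · exact Or.inl ⟨i.succAbove k, hk⟩
      · exact Or.inr ⟨i.succAbove k, hk⟩
    -- every G-edge at U j is the edge of arc i
    have key0 : ∀ y, G.Adj (U j) y → s(U j, y) = s((F i).1, (F i).2) := by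
      intro y hy
      obtain ⟨k, hk | hk⟩ := arc_adj F hy
      · have hki : k = i := huniq k (Or.inl (by rw [hk]))
        rw [hki] at hk
        rw [hk]
      · have hki : k = i := huniq k (Or.inr (by rw [hk]))
        rw [hki] at hk
        rw [hk]
        exact Sym2.eq_swap
    have hUj_not_inc' : ∀ k : Fin m, (F' k).1 ≠ U j ∧ (F' k).2 ≠ U j := by
      intro k
      constructor <;> intro h
      · exact Fin.succAbove_ne i k (huniq _ (Or.inl h))
      · exact Fin.succAbove_ne i k (huniq _ (Or.inr h))
    have hiso : ∀ y, ¬ G'.Adj (U j) y := by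
      intro y hy
      rw [hG', fromRel_adj] at hy
      rcases hy.2 with ⟨k, hk⟩ | ⟨k, hk⟩
      · exact (hUj_not_inc' k).1 (by rw [hk])
      · exact (hUj_not_inc' k).2 (by rw [hk])
    have hreach_iso : ∀ v, G'.Reachable v (U j) → v = U j := by
      intro v hr
      by_contra hv
      obtain ⟨q⟩ := hr
      obtain ⟨x, hx, -, -⟩ := Walk.exists_eq_cons_of_ne (Ne.symm hv) q.reverse
      exact hiso x hx
    have key : ∀ v, v ≠ U j → ∀ x, x ≠ U j → G.Reachable v x → G'.Reachable v x := by
      intro v hv x hx hr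
      obtain ⟨p0⟩ := hr
      set p : G.Walk v x := (p0.toPath : G.Walk v x) with hpdef
      have hp : p.IsPath := p0.toPath.2
      have hUjsup : U j ∉ p.support := by
        intro hmem
        have hq := p.take_spec hmem
        set q1 := p.takeUntil (U j) hmem with hq1
        set q2 := p.dropUntil (U j) hmem with hq2
        obtain ⟨x1, hx1, t1, ht1⟩ := Walk.exists_eq_cons_of_ne (Ne.symm hv) q1.reverse
        obtain ⟨x2, hx2, t2, ht2⟩ := Walk.exists_eq_cons_of_ne (Ne.symm hx) q2
        have he1 : s(U j, x1) ∈ q1.edges := by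
          have h1 : s(U j, x1) ∈ q1.reverse.edges := by rw [ht1]; simp
          rwa [Walk.edges_reverse, List.mem_reverse] at h1
        have he2 : s(U j, x2) ∈ q2.edges := by rw [ht2]; simp
        have hee1 := key0 x1 hx1
        have hee2 := key0 x2 hx2
        have hnodup : p.edges.Nodup :=
          Walk.edges_nodup_of_support_nodup ((Walk.isPath_def p).mp hp)
        have hsplit : p.edges = q1.edges ++ q2.edges := by
          conv_lhs => rw [← hq]
          rw [Walk.edges_append]
        rw [hsplit] at hnodup
        exact (List.nodup_append'.mp hnodup).2.2 (hee1 ▸ he1) (hee2 ▸ he2)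
      refine ⟨p.transfer G' ?_⟩
      intro e
      induction e using Sym2.ind with
      | _ x' y' =>
        intro he
        have heG : G.Adj x' y' := p.edges_subset_edgeSet he
        rw [SimpleGraph.mem_edgeSet, hG', fromRel_adj]
        rw [hG, fromRel_adj] at heG
        obtain ⟨hne, hrel⟩ := heG
        refine ⟨hne, ?_⟩
        have harc : ∀ k : Fin (m + 1), (F k = (x', y') ∨ F k = (y', x')) → k ≠ i := by
          rintro k hk rfl
          have hUjmem : U j ∈ p.support := by
            rcases hk with hk | hk <;> rcases hinc with h | h
            · rw [hk] at h; exact h ▸ p.fst_mem_support_of_mem_edges he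
            · rw [hk] at h; exact h ▸ p.snd_mem_support_of_mem_edges he
            · rw [hk] at h; exact h ▸ p.snd_mem_support_of_mem_edges he
            · rw [hk] at h; exact h ▸ p.fst_mem_support_of_mem_edges he
          exact hUjsup hUjmem
        rcases hrel with ⟨k, hk⟩ | ⟨k, hk⟩
        · obtain ⟨k0, hk0⟩ := Fin.exists_succAbove_eq (harc k (Or.inl hk))
          exact Or.inl ⟨k0, by rw [hF']; simp only []; rw [hk0]; exact hk⟩
        · obtain ⟨k0, hk0⟩ := Fin.exists_succAbove_eq (harc k (Or.inr hk))
          exact Or.inr ⟨k0, by rw [hF']; simp only []; rw [hk0]; exact hk⟩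
    have hforest' : G'.IsAcyclic := by
      intro v c hc
      exact hforest (c.mapLe hle) ((SimpleGraph.Walk.mapLe_isCycle hle).mpr hc)
    have hcomp' : ∀ v : Fin n, (∃ k, (F' k).1 = v ∨ (F' k).2 = v) →
        ∃! w : Fin n, G'.Reachable v w ∧ w ∉ Set.range U' := by
      rintro v ⟨k, hk⟩
      have hvUj : v ≠ U j := by
        rintro rfl
        exact Fin.succAbove_ne i k (huniq _ hk)
      obtain ⟨w, ⟨hreach, hwU⟩, hwuniq⟩ := hcomp v ⟨i.succAbove k, hk⟩
      have hwUj : w ≠ U j := fun h => hwU ⟨j, h.symm⟩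
      refine ⟨w, ⟨key v hvUj w hwUj hreach, ?_⟩, ?_⟩
      · rintro ⟨l, rfl⟩
        exact hwU ⟨j.succAbove l, rfl⟩
      · rintro w' ⟨hr', hw'⟩
        have hw'Uj : w' ≠ U j := by
          rintro rfl
          exact hvUj (hreach_iso v hr')
        apply hwuniq
        refine ⟨hr'.mono hle, ?_⟩
        rintro ⟨l, rfl⟩
        rcases eq_or_ne l j with rfl | hlj
        · exact hw'Uj rfl
        · obtain ⟨l0, hl0⟩ := Fin.exists_succAbove_eq hlj
          exact hw' ⟨l0, by rw [hU'def]; simp only []; rw [hl0]⟩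
    have hIH := IH F' (fun k => hloop _) (fun k l hkl =>
        hpar _ _ (fun h => hkl (Fin.succAbove_right_injective h)))
      U' (fun k l hkl => Fin.succAbove_right_injective (hU hkl)) hforest' hcomp'
    -- determinant computation
    set M : Matrix (Fin (m + 1)) (Fin (m + 1)) ℝ := Matrix.of fun i' j' =>
      (if (F i').2 = U j' then (1 : ℝ) else if (F i').1 = U j' then -1 else 0) with hM
    have hMzero : ∀ k, k ≠ i → M k j = 0 := by
      intro k hki
      rw [hM]
      simp only [Matrix.of_apply]
      rw [if_neg, if_neg]
      · exact fun h => hki (huniq k (Or.inl h))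
      · exact fun h => hki (huniq k (Or.inr h))
    have hMij : M i j = 1 ∨ M i j = -1 := by
      rw [hM]
      simp only [Matrix.of_apply]
      rcases hinc with h | h
      · right
        rw [if_neg, if_pos h]
        exact fun h2 => hloop i (h.trans h2.symm)
      · left
        rw [if_pos h]
    have hminor : M.submatrix i.succAbove j.succAbove = Matrix.of fun k l =>
        (if (F' k).2 = U' l then (1 : ℝ) else if (F' k).1 = U' l then -1 else 0) := by
      ext k l
      rfl
    have hdet : M.det = (-1) ^ ((i : ℕ) + (j : ℕ)) * M i j *
        (M.submatrix i.succAbove j.succAbove).det := by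
      rw [Matrix.det_succ_column M j]
      rw [Finset.sum_eq_single i]
      · intro k _ hki
        rw [hMzero k hki]
        ring
      · intro h
        exact absurd (Finset.mem_univ i) h
    rw [hminor] at hdet
    have hsign : ((-1 : ℝ)) ^ ((i : ℕ) + (j : ℕ)) = 1 ∨
        ((-1 : ℝ)) ^ ((i : ℕ) + (j : ℕ)) = -1 := by
      rcases Nat.even_or_odd ((i : ℕ) + (j : ℕ)) with h | h
      · exact Or.inl h.neg_one_pow
      · exact Or.inr h.neg_one_pow
    rw [hM] at hdet
    rcases hsign with h1 | h1 <;> rcases hMij with h2 | h2 <;>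
      rcases hIH with h3 | h3 <;>
      [left; right; right; left; right; left; left; right] <;>
      rw [hdet, h1, h3] <;> rw [hM] at h2 <;> rw [h2] <;> norm_num


end DetForestAux

/-- Let `F` be a set of `r` arcs of a directed graph and `U` a set of
`r` vertices, and let `N_S` be the square submatrix of the weighted incidence transpose
`D·Bᵀ` (rows indexed by the arcs of `F`, columns by the vertices of `U`, with positive
weights `D(u,v) > 0`). If `F` is a forest each of whose connected components contains
exactly one vertex outside `U`, then `det N_S = ± ∏_{uv ∈ F} D(u,v)`. -/
theorem det_eq_pm_prod_of_forest
    (n r : ℕ) (F : Fin r → Fin n × Fin n) (hloop : ∀ i, (F i).1 ≠ (F i).2)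
    (hpar : ∀ i j, i ≠ j → F i ≠ F j ∧ F i ≠ ((F j).2, (F j).1))
    (U : Fin r → Fin n) (hU : Function.Injective U)
    (Dw : Fin r → ℝ) (hDw : ∀ i, 0 < Dw i)
    (NS : Matrix (Fin r) (Fin r) ℝ)
    (hNS : ∀ i j, NS i j =
      Dw i * (if (F i).2 = U j then 1 else if (F i).1 = U j then -1 else 0))
    (hforest : (SimpleGraph.fromRel fun a b => ∃ i, F i = (a, b)).IsAcyclic)
    (hcomp : ∀ v : Fin n, (∃ i, (F i).1 = v ∨ (F i).2 = v) →
      ∃! w : Fin n,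
        (SimpleGraph.fromRel fun a b => ∃ i, F i = (a, b)).Reachable v w ∧
        w ∉ Set.range U) :
    NS.det = ∏ i, Dw i ∨ NS.det = -∏ i, Dw i := by
  have hM := DetForestAux.det_pm_one r F hloop hpar U hU hforest hcomp
  set M : Matrix (Fin r) (Fin r) ℝ := Matrix.of fun i j =>
    (if (F i).2 = U j then (1 : ℝ) else if (F i).1 = U j then -1 else 0) with hMdef
  have hNS' : NS = Matrix.diagonal Dw * M := by
    ext i j
    rw [Matrix.diagonal_mul, hNS]
    rfl
  have hdet : NS.det = (∏ i, Dw i) * M.det := by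
    rw [hNS', Matrix.det_mul, Matrix.det_diagonal]
  rcases hM with h | h
  · left; rw [hdet, h, mul_one]
  · right; rw [hdet, h]; ring
end

section
/- Let Γ be a directed pseudorange graph whose arc set is symmetric (uv ∈ E iff vu ∈ E). Then for any configuration p, the kernel of the pseudorange rigidity matrix R_P(Γ,p) = [R_D(Γ,p) R_S(Γ,p)] is the direct sum of (kernel of R_D of the underlying undirected graph on the position coordinates) × {0} and {0} × (kernel of the incidence-matrix part on the bias coordinates). Equivalently, a velocity vector (q_x, q_β) is admissible iff q_x is an admissible distance velocity and Bᵀ q_β = 0. -/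
/-- Let `Γ` be a directed pseudorange graph whose arc set `E` is
symmetric (`uv ∈ E ↔ vu ∈ E`) and with no coincident endpoints. Then a velocity vector
`(q, qβ)` is in the kernel of the pseudorange rigidity matrix (the row of an arc `uv`
being `⟪x_u − x_v, q_u − q_v⟫ − ‖x_u − x_v‖ qβ_u + ‖x_u − x_v‖ qβ_v`) if and only if
`q` is an admissible distance velocity (`⟪x_u − x_v, q_u − q_v⟫ = 0` for every arc) and
`qβ` is in the kernel of the transposed incidence matrix (`qβ_v − qβ_u = 0` for every
arc); i.e. the kernel decouples as a direct sum of the spatial and bias kernels. -/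
theorem symmetric_pseudorange_kernel_decoupling
    (n d : ℕ) (E : Finset (Fin n × Fin n))
    (hsym : ∀ e ∈ E, (e.2, e.1) ∈ E)
    (x : Fin n → EuclideanSpace ℝ (Fin d))
    (hx : ∀ e ∈ E, x e.1 ≠ x e.2)
    (q : Fin n → EuclideanSpace ℝ (Fin d)) (qβ : Fin n → ℝ) :
    (∀ e ∈ E,
        (inner ℝ (x e.1 - x e.2) (q e.1 - q e.2) : ℝ)
            - ‖x e.1 - x e.2‖ * qβ e.1 + ‖x e.1 - x e.2‖ * qβ e.2 = 0)
      ↔ ((∀ e ∈ E, (inner ℝ (x e.1 - x e.2) (q e.1 - q e.2) : ℝ) = 0) ∧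
          (∀ e ∈ E, qβ e.2 - qβ e.1 = 0)) := by
  constructor
  · intro h
    have key : ∀ e ∈ E,
        (inner ℝ (x e.1 - x e.2) (q e.1 - q e.2) : ℝ) = 0 ∧ qβ e.2 - qβ e.1 = 0 := by
      rintro ⟨u, v⟩ he
      have h1 := h (u, v) he
      have h2 := h (v, u) (hsym (u, v) he)
      simp only at h1 h2
      have hnorm : ‖x v - x u‖ = ‖x u - x v‖ := norm_sub_rev _ _
      have hin : (inner ℝ (x v - x u) (q v - q u) : ℝ)
          = inner ℝ (x u - x v) (q u - q v) := by
        rw [← neg_sub (x u) (x v), ← neg_sub (q u) (q v), inner_neg_neg]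
      rw [hnorm, hin] at h2
      have hr : ‖x u - x v‖ ≠ 0 := by
        simpa [sub_eq_zero] using hx (u, v) he
      constructor
      · linarith
      · have : ‖x u - x v‖ * (qβ v - qβ u) = 0 := by ring_nf; linarith
        have := mul_eq_zero.mp this
        tauto
    exact ⟨fun e he => (key e he).1, fun e he => (key e he).2⟩
  · rintro ⟨h1, h2⟩ e he
    have h3 : qβ e.2 = qβ e.1 := by have := h2 e he; linarith
    rw [h1 e he, h3]; ring
end
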